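/- Let X be an infinite dimensional operator space. If for every proper closed nontrivial subspace Y of X the quotient operator space X/Y is maximal, then X is maximal. -/

import Mathlib

/-!
The inequality `os.N ≤ maxN` is witnessed by the identity map, so the content is
`‖[u xᵢⱼ]‖ ≤ ‖[xᵢⱼ]‖` for every contraction `u : X → Z` into an operator space. Hahn–Banach
gives a contractive functional `φ` on `Mₙ(Z)` attaining `‖[u xᵢⱼ]‖`. The `n²` functionals
`x ↦ φ (eᵢⱼ ⊗ u x)` have a common nonzero kernel vector `v`, since `X` is infinite dimensional.
Then `φ` vanishes on `Mₙ(W)` for `W = span {u v}`, so the norm of `[u xᵢⱼ]` is not lowered in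
the quotient operator space `Z ⧸ W`, and `u` induces a contraction `X ⧸ span {v} → Z ⧸ W`.
Maximality of `X ⧸ span {v}` now bounds `‖[u xᵢⱼ]‖` by the quotient norm of `[xᵢⱼ]`, which is
at most `‖[xᵢⱼ]‖`.
-/

noncomputable section

namespace OSP

/-- A sequence of matrix norms (as bare functions) on a type `X`. -/
abbrev MatNorms (X : Type) : Type := ∀ n : ℕ, Matrix (Fin n) (Fin n) X → ℝ

/-- The operator norm of a scalar matrix, viewed as an operator on Euclidean space. -/
def scNorm {m : Type} [Fintype m] [DecidableEq m] (A : Matrix m m ℂ) : ℝ :=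
  ‖Matrix.toEuclideanCLM (𝕜 := ℂ) (n := m) A‖

/-- The two-sided scalar multiplication `a · x · b` of a matrix over `X` by scalar matrices. -/
def smulMat {X : Type} [AddCommGroup X] [Module ℂ X] {n : ℕ}
    (a : Matrix (Fin n) (Fin n) ℂ) (x : Matrix (Fin n) (Fin n) X)
    (b : Matrix (Fin n) (Fin n) ℂ) : Matrix (Fin n) (Fin n) X :=
  Matrix.of fun i j => ∑ k, ∑ l, (a i k * b l j) • x k l

/-- An (admissible, abstract) operator space structure on a normed space `X`:
a sequence of matrix norms satisfying Ruan's axioms whose first level is the norm of `X`. -/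
structure OSS (X : Type) [NormedAddCommGroup X] [NormedSpace ℂ X] where
  N : MatNorms X
  nonneg : ∀ n x, 0 ≤ N n x
  add_le : ∀ n (x y : Matrix (Fin n) (Fin n) X), N n (x + y) ≤ N n x + N n y
  smul_eq : ∀ n (c : ℂ) (x : Matrix (Fin n) (Fin n) X), N n (c • x) = ‖c‖ * N n x
  eq_zero : ∀ n (x : Matrix (Fin n) (Fin n) X), N n x = 0 → x = 0
  level_one : ∀ x : X, N 1 (Matrix.of fun _ _ => x) = ‖x‖
  ruan_mul : ∀ n (a b : Matrix (Fin n) (Fin n) ℂ) (x : Matrix (Fin n) (Fin n) X),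
    N n (smulMat a x b) ≤ scNorm a * N n x * scNorm b
  ruan_block : ∀ (n m : ℕ) (x : Matrix (Fin n) (Fin n) X) (y : Matrix (Fin m) (Fin m) X),
    N (n + m) ((Matrix.fromBlocks x 0 0 y).submatrix finSumFinEquiv.symm finSumFinEquiv.symm)
      = max (N n x) (N m y)

/-- A bundled operator space. -/
structure OpSpace where
  carrier : Type
  [grp : NormedAddCommGroup carrier]
  [mod : NormedSpace ℂ carrier]
  str : OSS carrier

attribute [instance] OpSpace.grp OpSpace.mod

/-- `f` amplifies with bound `C` at all matrix levels. -/
def ampBound {X Y : Type} (NX : MatNorms X) (NY : MatNorms Y) (f : X → Y) (C : ℝ) : Prop :=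
  ∀ n (x : Matrix (Fin n) (Fin n) X), NY n (x.map f) ≤ C * NX n x

/-- `f` is completely bounded. -/
def CompletelyBounded {X Y : Type} (NX : MatNorms X) (NY : MatNorms Y) (f : X → Y) : Prop :=
  ∃ C, 0 ≤ C ∧ ampBound NX NY f C

/-- The completely bounded norm of `f`. -/
def cbNorm {X Y : Type} (NX : MatNorms X) (NY : MatNorms Y) (f : X → Y) : ℝ :=
  sInf {C | 0 ≤ C ∧ ampBound NX NY f C}

/-- The matrix norms of the minimal operator space structure `Min X`. -/
def minN (X : Type) [NormedAddCommGroup X] [NormedSpace ℂ X] : MatNorms X :=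
  fun n x => sSup {r | ∃ f : X →L[ℂ] ℂ, ‖f‖ ≤ 1 ∧ r = scNorm (x.map ⇑f)}

/-- The matrix norms of the maximal operator space structure `Max X`. -/
def maxN (X : Type) [NormedAddCommGroup X] [NormedSpace ℂ X] : MatNorms X :=
  fun n x => sSup {r | ∃ (Z : OpSpace) (u : X →L[ℂ] Z.carrier), ‖u‖ ≤ 1 ∧ r = Z.str.N n (x.map ⇑u)}

/-- The inherited (subspace) matrix norms on a submodule. -/
def subN {X : Type} [NormedAddCommGroup X] [NormedSpace ℂ X]
    (NX : MatNorms X) (Y : Submodule ℂ X) : MatNorms Y :=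
  fun n x => NX n (x.map ⇑Y.subtype)

/-- The quotient matrix norms on `X ⧸ Y`. -/
def quotN {X : Type} [NormedAddCommGroup X] [NormedSpace ℂ X]
    (NX : MatNorms X) (Y : Submodule ℂ X) : MatNorms (X ⧸ Y) :=
  fun n z => sInf {r | ∃ x : Matrix (Fin n) (Fin n) X, x.map ⇑Y.mkQ = z ∧ r = NX n x}

/-- The canonical operator space matrix norms on `M_d(ℂ)`. -/
def MnN (d : ℕ) : MatNorms (Matrix (Fin d) (Fin d) ℂ) :=
  fun n x => scNorm (Matrix.of fun p q : Fin n × Fin d => x p.1 q.1 p.2 q.2)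

/-- The dual matrix norms on `X* = X →L[ℂ] ℂ`, via `M_n(X*) = CB(X, M_n)`. -/
def dualN {X : Type} [NormedAddCommGroup X] [NormedSpace ℂ X] (NX : MatNorms X) :
    MatNorms (X →L[ℂ] ℂ) :=
  fun n F => cbNorm NX (MnN n) (fun x => Matrix.of fun i j => F i j x)

/-- The annihilator `Y⊥` of a subspace `Y ⊆ X` inside the dual `X*`. -/
def ann {X : Type} [NormedAddCommGroup X] [NormedSpace ℂ X] (Y : Submodule ℂ X) :
    Submodule ℂ (X →L[ℂ] ℂ) where
  carrier := {f | ∀ y ∈ Y, f y = 0}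
  add_mem' := by intro f g hf hg y hy; simp [hf y hy, hg y hy]
  zero_mem' := by intro y hy; simp
  smul_mem' := by intro c f hf y hy; simp [hf y hy]

/-- A complete quotient map: every amplification maps the open unit ball onto the open unit ball. -/
def CompleteQuotientMap {X Z : Type} (NX : MatNorms X) (NZ : MatNorms Z) (f : X → Z) : Prop :=
  ∀ n, (fun x : Matrix (Fin n) (Fin n) X => x.map f) '' {x | NX n x < 1} = {z | NZ n z < 1}

end OSP

namespace OSP

variable {X : Type} [NormedAddCommGroup X] [NormedSpace ℂ X]

/-- The quotient map `X → X ⧸ Y` as a continuous linear map. -/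
def mkQCLM (Y : Submodule ℂ X) [IsClosed (Y : Set X)] : X →L[ℂ] X ⧸ Y :=
  Y.mkQ.mkContinuous 1 fun x => by
    simpa using Submodule.Quotient.norm_mk_le Y x

/-- Precomposition with the quotient map: the canonical embedding `(X/Y)* → X*`,
whose range is the annihilator `Y⊥`. -/
def pullQ (Y : Submodule ℂ X) [IsClosed (Y : Set X)] :
    ((X ⧸ Y) →L[ℂ] ℂ) →ₗ[ℂ] (X →L[ℂ] ℂ) where
  toFun f := f.comp (mkQCLM Y)
  map_add' := by intro f g; ext x; simp
  map_smul' := by intro c f; ext x; simp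

/-- The restriction map `X* → Y*`. -/
def resMap (Y : Submodule ℂ X) : (X →L[ℂ] ℂ) →ₗ[ℂ] (Y →L[ℂ] ℂ) where
  toFun f := f.comp Y.subtypeL
  map_add' := by intro f g; ext x; simp
  map_smul' := by intro c f; ext x; simp

theorem ann_le_ker_resMap (Y : Submodule ℂ X) : ann Y ≤ LinearMap.ker (resMap Y) := by
  intro f hf
  simp only [LinearMap.mem_ker]
  ext y
  exact hf y y.2

/-- The canonical map `X*/Y⊥ → Y*` induced by restriction. -/
def resQbar (Y : Submodule ℂ X) : ((X →L[ℂ] ℂ) ⧸ ann Y) →ₗ[ℂ] (Y →L[ℂ] ℂ) :=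
  (ann Y).liftQ (resMap Y) (ann_le_ker_resMap Y)

end OSP

lemma exists_ne_zero_forall_eq_zero_of_not_finiteDimensional {K V ι : Type*} [Field K]
    [AddCommGroup V] [Module K V] [Finite ι] (hV : ¬ FiniteDimensional K V)
    (φ : ι → V →ₗ[K] K) : ∃ v ≠ 0, ∀ i, φ i v = 0 := by
  by_contra! h
  refine hV (FiniteDimensional.of_injective (LinearMap.pi φ) ?_)
  refine LinearMap.ker_eq_bot.mp (LinearMap.ker_eq_bot'.mpr fun v hv => ?_)
  by_contra hne
  obtain ⟨i, hi⟩ := h v hne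
  exact hi (congrFun hv i)

lemma Submodule.span_singleton_ne_top_of_not_finiteDimensional {K V : Type*} [DivisionRing K]
    [AddCommGroup V] [Module K V] (hV : ¬ FiniteDimensional K V) (v : V) : K ∙ v ≠ ⊤ := by
  intro htop
  have : FiniteDimensional K (⊤ : Submodule K V) := htop ▸ inferInstance
  exact hV (Module.Finite.equiv Submodule.topEquiv)

section QuotientLift

variable {𝕜 E F : Type*} [NontriviallyNormedField 𝕜] [SeminormedAddCommGroup E] [NormedSpace 𝕜 E]
  [SeminormedAddCommGroup F] [NormedSpace 𝕜 F] {Y : Submodule 𝕜 E} {f : E →L[𝕜] F}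

lemma ContinuousLinearMap.norm_apply_le_mul_norm_mk (hf : Y ≤ LinearMap.ker (f : E →ₗ[𝕜] F))
    (x : E) : ‖f x‖ ≤ ‖f‖ * ‖Submodule.Quotient.mk (p := Y) x‖ := by
  rcases (norm_nonneg f).eq_or_lt' with h | h
  · simpa [h] using f.le_opNorm x
  rw [← div_le_iff₀' h]
  refine (QuotientAddGroup.le_norm_iff (S := Y.toAddSubgroup)).mpr fun m hm => ?_
  have hmx : f (m - x) = 0 := hf ((Submodule.Quotient.eq Y).mp hm)
  rw [map_sub, sub_eq_zero] at hmx
  rw [div_le_iff₀' h, ← hmx]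
  exact f.le_opNorm m

lemma ContinuousLinearMap.exists_comp_mkQ_eq (hf : Y ≤ LinearMap.ker (f : E →ₗ[𝕜] F)) :
    ∃ g : (E ⧸ Y) →L[𝕜] F, ‖g‖ ≤ ‖f‖ ∧ ∀ x, g (Y.mkQ x) = f x := by
  have hbound (z : E ⧸ Y) : ‖Y.liftQ (f : E →ₗ[𝕜] F) hf z‖ ≤ ‖f‖ * ‖z‖ := by
    obtain ⟨x, rfl⟩ := Y.mkQ_surjective z
    exact f.norm_apply_le_mul_norm_mk hf x
  exact ⟨(Y.liftQ _ hf).mkContinuous ‖f‖ hbound,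
    LinearMap.mkContinuous_norm_le _ (norm_nonneg f) hbound, fun x => rfl⟩

end QuotientLift

lemma LinearMap.map_eq_zero_of_forall_mem {R M N m : Type*} [Semiring R] [AddCommMonoid M]
    [Module R M] [AddCommMonoid N] [Module R N] [Fintype m] [DecidableEq m]
    (φ : Matrix m m M →ₗ[R] N) {W : Submodule R M}
    (hφ : ∀ i j, ∀ w ∈ W, φ (Matrix.single i j w) = 0) {x : Matrix m m M}
    (hx : ∀ i j, x i j ∈ W) : φ x = 0 := by
  rw [Matrix.matrix_eq_sum_single x]
  simp only [map_sum, hφ _ _ _ (hx _ _), Finset.sum_const_zero]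

namespace OSP

open Matrix

section ScalarMatrices

variable {k : ℕ}

lemma scNorm_nonneg (A : Matrix (Fin k) (Fin k) ℂ) : 0 ≤ scNorm A :=
  norm_nonneg _

lemma scNorm_le_one_of_sum_sq_le (A : Matrix (Fin k) (Fin k) ℂ)
    (h : ∀ v : Fin k → ℂ, ∑ p, ‖(A *ᵥ v) p‖ ^ 2 ≤ ∑ p, ‖v p‖ ^ 2) :
    scNorm A ≤ 1 := by
  refine ContinuousLinearMap.opNorm_le_bound _ zero_le_one fun v => ?_
  rw [one_mul, EuclideanSpace.norm_eq, EuclideanSpace.norm_eq]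
  exact Real.sqrt_le_sqrt (h v.ofLp)

lemma scNorm_single_one_le_one (i j : Fin k) : scNorm (single i j (1 : ℂ)) ≤ 1 := by
  refine scNorm_le_one_of_sum_sq_le _ fun v => ?_
  calc ∑ p, ‖(single i j (1 : ℂ) *ᵥ v) p‖ ^ 2 = ‖v j‖ ^ 2 := by
        simp [single_mulVec, Function.update_apply, apply_ite]
    _ ≤ ∑ p, ‖v p‖ ^ 2 := Finset.single_le_sum (fun p _ => sq_nonneg ‖v p‖) (Finset.mem_univ j)

lemma scNorm_diagonal_indicator_le_one (c : Fin k → Bool) :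
    scNorm (diagonal fun p => if c p then (1 : ℂ) else 0) ≤ 1 := by
  refine scNorm_le_one_of_sum_sq_le _ fun v => Finset.sum_le_sum fun p _ => ?_
  by_cases hc : c p <;> simp [mulVec_diagonal, hc]

end ScalarMatrices

section SmulMat

variable {X : Type} [AddCommGroup X] [Module ℂ X] {n : ℕ}

lemma smulMat_single_single (r s i j : Fin n) (y : Matrix (Fin n) (Fin n) X) :
    smulMat (single r i 1) y (single j s 1) = single r s (y i j) := by
  ext p q
  by_cases hr : r = p <;> by_cases hs : s = q <;>
    simp [smulMat, single_apply, hr, hs, ite_and, Finset.sum_ite_eq]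

lemma smulMat_diagonal_indicator (c : Fin n → Bool) (M : Matrix (Fin n) (Fin n) X) :
    smulMat (diagonal fun p => if c p then 1 else 0) M (diagonal fun p => if c p then 1 else 0)
      = of fun p q => if c p ∧ c q then M p q else 0 := by
  ext p q
  by_cases hp : c p <;> by_cases hq : c q <;>
    simp [smulMat, diagonal_apply, hp, hq, ite_and, Finset.sum_ite_eq, Finset.sum_ite_eq']

lemma map_smulMat {Y : Type} [AddCommGroup Y] [Module ℂ Y] (f : X →ₗ[ℂ] Y)
    (a b : Matrix (Fin n) (Fin n) ℂ) (x : Matrix (Fin n) (Fin n) X) :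
    (smulMat a x b).map f = smulMat a (x.map f) b := by
  ext p q
  simp [smulMat, map_sum, map_smul]

end SmulMat

namespace OSS

variable {X : Type} [NormedAddCommGroup X] [NormedSpace ℂ X] (os : OSS X)

lemma N_zero (n : ℕ) : os.N n 0 = 0 := by
  simpa using os.smul_eq n 0 0

lemma N_sum_le {ι : Type*} (n : ℕ) (s : Finset ι) (f : ι → Matrix (Fin n) (Fin n) X) :
    os.N n (∑ i ∈ s, f i) ≤ ∑ i ∈ s, os.N n (f i) :=
  Finset.le_sum_of_subadditive (os.N n) (os.N_zero n).le (os.add_le n) s f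

lemma N_smulMat_le {n : ℕ} {a b : Matrix (Fin n) (Fin n) ℂ} (ha : scNorm a ≤ 1)
    (hb : scNorm b ≤ 1) (x : Matrix (Fin n) (Fin n) X) :
    os.N n (smulMat a x b) ≤ os.N n x :=
  calc os.N n (smulMat a x b) ≤ scNorm a * os.N n x * scNorm b := os.ruan_mul n a b x
    _ ≤ os.N n x := by
        have hax := mul_nonneg (scNorm_nonneg a) (os.nonneg n x)
        nlinarith [os.nonneg n x, mul_le_mul_of_nonneg_left hb hax]

lemma N_compress_le {n : ℕ} (c : Fin n → Bool) (M : Matrix (Fin n) (Fin n) X) :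
    os.N n (of fun p q => if c p ∧ c q then M p q else 0) ≤ os.N n M := by
  rw [← smulMat_diagonal_indicator]
  exact os.N_smulMat_le (scNorm_diagonal_indicator_le_one c)
    (scNorm_diagonal_indicator_le_one c) M

lemma N_fromBlocks_zero₁₁ {k m : ℕ} (y : Matrix (Fin k) (Fin k) X) :
    os.N (k + m) ((fromBlocks y 0 0 0).submatrix finSumFinEquiv.symm finSumFinEquiv.symm)
      = os.N k y := by
  rw [os.ruan_block, os.N_zero, max_eq_left (os.nonneg _ _)]

lemma N_fromBlocks_zero₂₂ {k m : ℕ} (w : Matrix (Fin m) (Fin m) X) :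
    os.N (k + m) ((fromBlocks 0 0 0 w).submatrix finSumFinEquiv.symm finSumFinEquiv.symm)
      = os.N m w := by
  rw [os.ruan_block, os.N_zero, max_eq_right (os.nonneg _ _)]

lemma N_toBlocks₁₁_le {k m : ℕ} (M : Matrix (Fin (k + m)) (Fin (k + m)) X) :
    os.N k (M.submatrix finSumFinEquiv finSumFinEquiv).toBlocks₁₁ ≤ os.N (k + m) M := by
  have hcompress : (of fun p q => if (finSumFinEquiv.symm p).isLeft ∧
      (finSumFinEquiv.symm q).isLeft then M p q else 0) =
      (fromBlocks (M.submatrix finSumFinEquiv finSumFinEquiv).toBlocks₁₁ 0 0 0).submatrix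
        finSumFinEquiv.symm finSumFinEquiv.symm := by
    ext p q
    obtain ⟨a, rfl⟩ := finSumFinEquiv.surjective p
    obtain ⟨b, rfl⟩ := finSumFinEquiv.surjective q
    rcases a with a | a <;> rcases b with b | b <;> simp [toBlocks₁₁]
  rw [← os.N_fromBlocks_zero₁₁ (m := m), ← hcompress]
  exact os.N_compress_le _ M

lemma N_toBlocks₂₂_le {k m : ℕ} (M : Matrix (Fin (k + m)) (Fin (k + m)) X) :
    os.N m (M.submatrix finSumFinEquiv finSumFinEquiv).toBlocks₂₂ ≤ os.N (k + m) M := by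
  have hcompress : (of fun p q => if (finSumFinEquiv.symm p).isRight ∧
      (finSumFinEquiv.symm q).isRight then M p q else 0) =
      (fromBlocks 0 0 0 (M.submatrix finSumFinEquiv finSumFinEquiv).toBlocks₂₂).submatrix
        finSumFinEquiv.symm finSumFinEquiv.symm := by
    ext p q
    obtain ⟨a, rfl⟩ := finSumFinEquiv.surjective p
    obtain ⟨b, rfl⟩ := finSumFinEquiv.surjective q
    rcases a with a | a <;> rcases b with b | b <;> simp [toBlocks₂₂]
  rw [← os.N_fromBlocks_zero₂₂ (k := k), ← hcompress]
  exact os.N_compress_le _ M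

lemma N_single_inl_zero {m : ℕ} (z : X) :
    os.N (1 + m) (single (finSumFinEquiv (.inl 0)) (finSumFinEquiv (.inl 0)) z) = ‖z‖ := by
  have hblock : single (finSumFinEquiv (.inl 0)) (finSumFinEquiv (.inl 0)) z =
      (fromBlocks (of fun _ _ : Fin 1 => z) 0 0 (0 : Matrix (Fin m) (Fin m) X)).submatrix
        finSumFinEquiv.symm finSumFinEquiv.symm := by
    ext p q
    obtain ⟨a, rfl⟩ := finSumFinEquiv.surjective p
    obtain ⟨b, rfl⟩ := finSumFinEquiv.surjective q
    rcases a with a | a <;> rcases b with b | b <;>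
      simp [single_apply, Fin.fin_one_eq_zero, Fin.ext_iff] <;> omega
  rw [hblock, os.N_fromBlocks_zero₁₁, os.level_one]

lemma norm_apply_le_N {n : ℕ} (y : Matrix (Fin n) (Fin n) X) (i j : Fin n) :
    ‖y i j‖ ≤ os.N n y := by
  obtain ⟨m, rfl⟩ : ∃ m, n = 1 + m := ⟨n - 1, by have := i.pos; omega⟩
  set i₀ : Fin (1 + m) := finSumFinEquiv (.inl 0)
  calc ‖y i j‖ = os.N (1 + m) (smulMat (single i₀ i 1) y (single j i₀ 1)) := by
        rw [smulMat_single_single, os.N_single_inl_zero]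
    _ ≤ os.N (1 + m) y :=
        os.N_smulMat_le (scNorm_single_one_le_one _ _) (scNorm_single_one_le_one _ _) y

lemma N_single_le {n : ℕ} (i j : Fin n) (z : X) : os.N n (single i j z) ≤ ‖z‖ := by
  obtain ⟨m, rfl⟩ : ∃ m, n = 1 + m := ⟨n - 1, by have := i.pos; omega⟩
  set i₀ : Fin (1 + m) := finSumFinEquiv (.inl 0)
  calc os.N (1 + m) (single i j z)
      = os.N (1 + m) (smulMat (single i i₀ 1) (single i₀ i₀ z) (single i₀ j 1)) := by
        rw [smulMat_single_single, single_apply_same]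
    _ ≤ os.N (1 + m) (single i₀ i₀ z) :=
        os.N_smulMat_le (scNorm_single_one_le_one _ _) (scNorm_single_one_le_one _ _) _
    _ = ‖z‖ := os.N_single_inl_zero z

lemma N_le_sum_norm {n : ℕ} (y : Matrix (Fin n) (Fin n) X) :
    os.N n y ≤ ∑ i, ∑ j, ‖y i j‖ :=
  calc os.N n y = os.N n (∑ i, ∑ j, single i j (y i j)) := by
        rw [← matrix_eq_sum_single]
    _ ≤ ∑ i, os.N n (∑ j, single i j (y i j)) := os.N_sum_le n _ _
    _ ≤ ∑ i, ∑ j, ‖y i j‖ := Finset.sum_le_sum fun i _ =>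
        (os.N_sum_le n _ _).trans (Finset.sum_le_sum fun j _ => os.N_single_le i j _)

end OSS

section Quotient

variable {Z : Type} [NormedAddCommGroup Z] [NormedSpace ℂ Z] (oz : OSS Z) (W : Submodule ℂ Z)

lemma exists_map_mkQ_eq {n : ℕ} (z : Matrix (Fin n) (Fin n) (Z ⧸ W)) :
    ∃ x : Matrix (Fin n) (Fin n) Z, x.map W.mkQ = z :=
  ⟨z.map fun a => (W.mkQ_surjective a).choose, by
    ext i j
    exact (W.mkQ_surjective (z i j)).choose_spec⟩

variable {W}

lemma quotN_le {n : ℕ} {z : Matrix (Fin n) (Fin n) (Z ⧸ W)} {x : Matrix (Fin n) (Fin n) Z}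
    (hx : x.map W.mkQ = z) : quotN oz.N W n z ≤ oz.N n x :=
  csInf_le ⟨0, by rintro r ⟨x, -, rfl⟩; exact oz.nonneg n x⟩ ⟨x, hx, rfl⟩

lemma le_quotN {n : ℕ} {z : Matrix (Fin n) (Fin n) (Z ⧸ W)} {r : ℝ}
    (h : ∀ x : Matrix (Fin n) (Fin n) Z, x.map W.mkQ = z → r ≤ oz.N n x) :
    r ≤ quotN oz.N W n z := by
  obtain ⟨x, hx⟩ := exists_map_mkQ_eq W z
  exact le_csInf ⟨_, x, hx, rfl⟩ (by rintro _ ⟨x, hx, rfl⟩; exact h x hx)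

lemma exists_map_mkQ_eq_N_lt {n : ℕ} {z : Matrix (Fin n) (Fin n) (Z ⧸ W)} {r : ℝ}
    (hr : quotN oz.N W n z < r) :
    ∃ x : Matrix (Fin n) (Fin n) Z, x.map W.mkQ = z ∧ oz.N n x < r := by
  obtain ⟨x, hx⟩ := exists_map_mkQ_eq W z
  obtain ⟨_, ⟨x, hx, rfl⟩, hlt⟩ := exists_lt_of_csInf_lt
    (s := {r | ∃ x : Matrix (Fin n) (Fin n) Z, x.map W.mkQ = z ∧ r = oz.N n x}) ⟨_, x, hx, rfl⟩ hr
  exact ⟨x, hx, hlt⟩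

lemma quotN_nonneg {n : ℕ} (z : Matrix (Fin n) (Fin n) (Z ⧸ W)) : 0 ≤ quotN oz.N W n z :=
  le_quotN oz fun x _ => oz.nonneg n x

lemma quotN_le_mul {n n' : ℕ} {z : Matrix (Fin n) (Fin n) (Z ⧸ W)}
    {z' : Matrix (Fin n') (Fin n') (Z ⧸ W)} {c : ℝ} (hc : 0 ≤ c)
    (h : ∀ x : Matrix (Fin n) (Fin n) Z, x.map W.mkQ = z →
      ∃ x' : Matrix (Fin n') (Fin n') Z, x'.map W.mkQ = z' ∧ oz.N n' x' ≤ c * oz.N n x) :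
    quotN oz.N W n' z' ≤ c * quotN oz.N W n z := by
  obtain ⟨x, hx⟩ := exists_map_mkQ_eq W z
  unfold quotN
  rw [← smul_eq_mul, ← Real.sInf_smul_of_nonneg hc]
  refine le_csInf ⟨_, ⟨_, ⟨x, hx, rfl⟩, rfl⟩⟩ ?_
  rintro _ ⟨_, ⟨x, hx, rfl⟩, rfl⟩
  obtain ⟨x', hx', hle⟩ := h x hx
  exact (quotN_le oz hx').trans hle

lemma norm_apply_le_quotN {n : ℕ} (z : Matrix (Fin n) (Fin n) (Z ⧸ W)) (i j : Fin n) :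
    ‖z i j‖ ≤ quotN oz.N W n z :=
  le_quotN oz fun x hx => by
    rw [← hx]
    exact (Submodule.Quotient.norm_mk_le W (x i j)).trans (oz.norm_apply_le_N x i j)

lemma quotN_add_le {n : ℕ} (z₁ z₂ : Matrix (Fin n) (Fin n) (Z ⧸ W)) :
    quotN oz.N W n (z₁ + z₂) ≤ quotN oz.N W n z₁ + quotN oz.N W n z₂ := by
  refine le_of_forall_pos_lt_add fun ε hε => ?_
  obtain ⟨x₁, rfl, hx₁⟩ := exists_map_mkQ_eq_N_lt oz
    (lt_add_of_pos_right (quotN oz.N W n z₁) (half_pos hε))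
  obtain ⟨x₂, rfl, hx₂⟩ := exists_map_mkQ_eq_N_lt oz
    (lt_add_of_pos_right (quotN oz.N W n z₂) (half_pos hε))
  calc quotN oz.N W n (x₁.map W.mkQ + x₂.map W.mkQ) ≤ oz.N n (x₁ + x₂) :=
        quotN_le oz (Matrix.map_add _ (map_add _) x₁ x₂)
    _ ≤ oz.N n x₁ + oz.N n x₂ := oz.add_le n x₁ x₂
    _ < _ := by linarith

lemma quotN_smul_le {n : ℕ} (c : ℂ) (z : Matrix (Fin n) (Fin n) (Z ⧸ W)) :
    quotN oz.N W n (c • z) ≤ ‖c‖ * quotN oz.N W n z :=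
  quotN_le_mul oz (norm_nonneg c) fun x hx =>
    ⟨c • x, by rw [← hx]; exact Matrix.map_smul _ c (map_smul W.mkQ c) x,
      (oz.smul_eq n c x).le⟩

lemma quotN_smul {n : ℕ} (c : ℂ) (z : Matrix (Fin n) (Fin n) (Z ⧸ W)) :
    quotN oz.N W n (c • z) = ‖c‖ * quotN oz.N W n z := by
  refine le_antisymm (quotN_smul_le oz c z) ?_
  rcases eq_or_ne c 0 with rfl | hc
  · simpa using quotN_nonneg oz _
  calc ‖c‖ * quotN oz.N W n z = ‖c‖ * quotN oz.N W n (c⁻¹ • c • z) := by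
        rw [smul_smul, inv_mul_cancel₀ hc, one_smul]
    _ ≤ ‖c‖ * (‖c⁻¹‖ * quotN oz.N W n (c • z)) := by
        gcongr
        exact quotN_smul_le oz _ _
    _ = quotN oz.N W n (c • z) := by
        rw [norm_inv, ← mul_assoc, mul_inv_cancel₀ (norm_ne_zero_iff.mpr hc), one_mul]

lemma quotN_ruan_mul {n : ℕ} (a b : Matrix (Fin n) (Fin n) ℂ)
    (z : Matrix (Fin n) (Fin n) (Z ⧸ W)) :
    quotN oz.N W n (smulMat a z b) ≤ scNorm a * quotN oz.N W n z * scNorm b := by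
  have := quotN_le_mul oz (mul_nonneg (scNorm_nonneg a) (scNorm_nonneg b))
    (z := z) (z' := smulMat a z b) fun x hx =>
      ⟨smulMat a x b, by rw [map_smulMat, hx], by linarith [oz.ruan_mul n a b x]⟩
  linarith

lemma quotN_one_le_norm (a : Z ⧸ W) : quotN oz.N W 1 (of fun _ _ => a) ≤ ‖a‖ := by
  refine le_of_forall_pos_lt_add fun ε hε => ?_
  obtain ⟨b, rfl, hb⟩ := Submodule.Quotient.norm_mk_lt a hε
  calc quotN oz.N W 1 (of fun _ _ => Submodule.Quotient.mk b) ≤ oz.N 1 (of fun _ _ => b) :=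
        quotN_le oz (by ext; rfl)
    _ < _ := by rwa [oz.level_one]

lemma quotN_fromBlocks_le {n m : ℕ} (z : Matrix (Fin n) (Fin n) (Z ⧸ W))
    (w : Matrix (Fin m) (Fin m) (Z ⧸ W)) :
    quotN oz.N W (n + m) ((fromBlocks z 0 0 w).submatrix finSumFinEquiv.symm finSumFinEquiv.symm)
      ≤ max (quotN oz.N W n z) (quotN oz.N W m w) := by
  refine le_of_forall_pos_lt_add fun ε hε => ?_
  obtain ⟨x, rfl, hx⟩ := exists_map_mkQ_eq_N_lt oz (lt_add_of_pos_right (quotN oz.N W n z) hε)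
  obtain ⟨y, rfl, hy⟩ := exists_map_mkQ_eq_N_lt oz (lt_add_of_pos_right (quotN oz.N W m w) hε)
  calc _ ≤ oz.N (n + m) ((fromBlocks x 0 0 y).submatrix finSumFinEquiv.symm finSumFinEquiv.symm) :=
        quotN_le oz (by
          rw [← submatrix_map, fromBlocks_map, Matrix.map_zero _ (map_zero _),
            Matrix.map_zero _ (map_zero _)])
    _ = max (oz.N n x) (oz.N m y) := oz.ruan_block n m x y
    _ < _ := by rw [← max_add_add_right]; exact max_lt_max hx hy

lemma le_quotN_fromBlocks {n m : ℕ} (z : Matrix (Fin n) (Fin n) (Z ⧸ W))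
    (w : Matrix (Fin m) (Fin m) (Z ⧸ W)) :
    max (quotN oz.N W n z) (quotN oz.N W m w) ≤
      quotN oz.N W (n + m)
        ((fromBlocks z 0 0 w).submatrix finSumFinEquiv.symm finSumFinEquiv.symm) := by
  refine le_quotN oz fun M hM => ?_
  have hblocks : (M.submatrix finSumFinEquiv finSumFinEquiv).map W.mkQ = fromBlocks z 0 0 w := by
    rw [← submatrix_map, hM]
    simp
  refine max_le ((quotN_le oz ?_).trans (oz.N_toBlocks₁₁_le M))
    ((quotN_le oz ?_).trans (oz.N_toBlocks₂₂_le M))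
  · exact (congrArg toBlocks₁₁ hblocks).trans (toBlocks_fromBlocks₁₁ _ _ _ _)
  · exact (congrArg toBlocks₂₂ hblocks).trans (toBlocks_fromBlocks₂₂ _ _ _ _)

variable (W) [IsClosed (W : Set Z)]

def OSS.quotient : OSS (Z ⧸ W) where
  N := quotN oz.N W
  nonneg _ := quotN_nonneg oz
  add_le _ := quotN_add_le oz
  smul_eq _ := quotN_smul oz
  eq_zero n z hz := by
    ext i j
    exact norm_le_zero_iff.mp (hz ▸ norm_apply_le_quotN oz z i j)
  level_one a := le_antisymm (quotN_one_le_norm oz a)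
    (by simpa using norm_apply_le_quotN oz (of fun _ _ => a) 0 0)
  ruan_mul _ := quotN_ruan_mul oz
  ruan_block _ _ z w := le_antisymm (quotN_fromBlocks_le oz z w) (le_quotN_fromBlocks oz z w)

end Quotient

namespace OSS

variable {X : Type} [NormedAddCommGroup X] [NormedSpace ℂ X] (os : OSS X)

/-- `Mₙ(X)`; the argument `os` only selects the norm `os.N n` given by the instances below. -/
def Mat (_os : OSS X) (n : ℕ) : Type := Matrix (Fin n) (Fin n) X

variable {n : ℕ}

instance : NormedAddCommGroup (os.Mat n) :=
  AddGroupNorm.toNormedAddCommGroup (E := Matrix (Fin n) (Fin n) X)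
    { toFun := os.N n
      map_zero' := os.N_zero n
      add_le' := os.add_le n
      neg' := fun x => by simpa using os.smul_eq n (-1) x
      eq_zero_of_map_eq_zero' := os.eq_zero n }

instance : NormedSpace ℂ (os.Mat n) where
  toModule := inferInstanceAs (Module ℂ (Matrix (Fin n) (Fin n) X))
  norm_smul_le c x := (os.smul_eq n c x).le

lemma exists_norming_functional (x : Matrix (Fin n) (Fin n) X) :
    ∃ φ : Matrix (Fin n) (Fin n) X →ₗ[ℂ] ℂ, (∀ y, ‖φ y‖ ≤ os.N n y) ∧ ‖φ x‖ = os.N n x := by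
  rcases eq_or_ne x 0 with rfl | hx
  · exact ⟨0, fun y => by simpa using os.nonneg n y, by simp [os.N_zero]⟩
  let e : Matrix (Fin n) (Fin n) X ≃ₗ[ℂ] os.Mat n := LinearEquiv.refl ℂ _
  obtain ⟨g, hg, hgx⟩ := exists_dual_vector ℂ (e x) (norm_ne_zero_iff.mpr hx)
  refine ⟨g.toLinearMap ∘ₗ e.toLinearMap, fun y => ?_, ?_⟩
  · exact (g.le_opNorm (e y)).trans_eq (by rw [hg, one_mul]; rfl)
  · change ‖g (e x)‖ = _
    rw [hgx, RCLike.norm_ofReal, abs_norm]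
    rfl

lemma N_le_quotN_of_norming {W : Submodule ℂ X} {x : Matrix (Fin n) (Fin n) X}
    {φ : Matrix (Fin n) (Fin n) X →ₗ[ℂ] ℂ} (hφ : ∀ y, ‖φ y‖ ≤ os.N n y)
    (hφx : ‖φ x‖ = os.N n x) (hφW : ∀ i j, ∀ w ∈ W, φ (single i j w) = 0) :
    os.N n x ≤ quotN os.N W n (x.map W.mkQ) :=
  le_quotN os fun x' hx' => by
    have hdiff : φ (x' - x) = 0 := φ.map_eq_zero_of_forall_mem hφW fun i j =>
      (Submodule.Quotient.eq W).mp (congrFun (congrFun hx' i) j)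
    rw [map_sub, sub_eq_zero] at hdiff
    rw [← hφx, ← hdiff]
    exact hφ x'

end OSS

section Max

variable {V : Type} [NormedAddCommGroup V] [NormedSpace ℂ V] {n : ℕ}

lemma le_maxN (Z : OpSpace) {u : V →L[ℂ] Z.carrier} (hu : ‖u‖ ≤ 1)
    (x : Matrix (Fin n) (Fin n) V) : Z.str.N n (x.map u) ≤ maxN V n x := by
  refine le_csSup ⟨∑ i, ∑ j, ‖x i j‖, ?_⟩ ⟨Z, u, hu, rfl⟩
  rintro _ ⟨Z, u, hu, rfl⟩
  refine (Z.str.N_le_sum_norm _).trans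
    (Finset.sum_le_sum fun i _ => Finset.sum_le_sum fun j _ => ?_)
  simpa using u.le_of_opNorm_le hu (x i j)

lemma maxN_le {x : Matrix (Fin n) (Fin n) V} {r : ℝ} (hr : 0 ≤ r)
    (h : ∀ (Z : OpSpace) (u : V →L[ℂ] Z.carrier), ‖u‖ ≤ 1 → Z.str.N n (x.map u) ≤ r) :
    maxN V n x ≤ r :=
  Real.sSup_le (by rintro _ ⟨Z, u, hu, rfl⟩; exact h Z u hu) hr

lemma OSS.N_le_maxN (os : OSS V) (x : Matrix (Fin n) (Fin n) V) : os.N n x ≤ maxN V n x := by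
  simpa using le_maxN ⟨V, os⟩ (ContinuousLinearMap.norm_id_le (E := V)) x

end Max

lemma OSS.N_map_le_of_forall_quotient_maximal {X : Type} [NormedAddCommGroup X]
    [NormedSpace ℂ X] (os : OSS X) (hinf : ¬ FiniteDimensional ℂ X)
    (h : ∀ (Y : Submodule ℂ X) [IsClosed (Y : Set X)], Y ≠ ⊥ → Y ≠ ⊤ →
      ∀ (n : ℕ) (z : Matrix (Fin n) (Fin n) (X ⧸ Y)), quotN os.N Y n z = maxN (X ⧸ Y) n z)
    (Z : OpSpace) {u : X →L[ℂ] Z.carrier} (hu : ‖u‖ ≤ 1) {n : ℕ}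
    (x : Matrix (Fin n) (Fin n) X) : Z.str.N n (x.map u) ≤ os.N n x := by
  obtain ⟨φ, hφ, hφx⟩ := Z.str.exists_norming_functional (x.map u)
  obtain ⟨v, hv, hφv⟩ := exists_ne_zero_forall_eq_zero_of_not_finiteDimensional hinf
    fun p : Fin n × Fin n => φ ∘ₗ singleLinearMap ℂ p.1 p.2 ∘ₗ (u : X →ₗ[ℂ] Z.carrier)
  set Y := ℂ ∙ v
  set W := ℂ ∙ u v
  have : IsClosed (Y : Set X) := Y.closed_of_finiteDimensional
  have : IsClosed (W : Set Z.carrier) := W.closed_of_finiteDimensional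
  have hYW : Y ≤ LinearMap.ker ((mkQCLM W).comp u : X →ₗ[ℂ] Z.carrier ⧸ W) := by
    rw [Submodule.span_singleton_le_iff_mem, LinearMap.mem_ker]
    exact (Submodule.Quotient.mk_eq_zero W).mpr (Submodule.mem_span_singleton_self _)
  obtain ⟨w, hw, hwY⟩ := ((mkQCLM W).comp u).exists_comp_mkQ_eq hYW
  have hw₁ : ‖w‖ ≤ 1 :=
    hw.trans <| (ContinuousLinearMap.opNorm_comp_le _ _).trans <|
      mul_le_one₀ (LinearMap.mkContinuous_norm_le _ zero_le_one _) (norm_nonneg u) hu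
  have hφW : ∀ i j, ∀ y ∈ W, φ (single i j y) = 0 := by
    intro i j y hy
    obtain ⟨c, rfl⟩ := Submodule.mem_span_singleton.mp hy
    simpa [← smul_single] using congrArg (c • ·) (hφv (i, j))
  calc Z.str.N n (x.map u) ≤ quotN Z.str.N W n ((x.map u).map W.mkQ) :=
        Z.str.N_le_quotN_of_norming hφ hφx hφW
    _ = (Z.str.quotient W).N n ((x.map Y.mkQ).map w) := by
        congr 1
        ext i j
        exact (hwY (x i j)).symm
    _ ≤ maxN (X ⧸ Y) n (x.map Y.mkQ) := le_maxN ⟨_, Z.str.quotient W⟩ hw₁ _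
    _ = quotN os.N Y n (x.map Y.mkQ) :=
        (h Y (by simpa [Y] using hv)
          (Submodule.span_singleton_ne_top_of_not_finiteDimensional hinf v) n _).symm
    _ ≤ os.N n x := quotN_le os rfl

end OSP

theorem stmt18_general (X : Type) [NormedAddCommGroup X] [NormedSpace ℂ X]
    (os : OSP.OSS X) (hinf : ¬ FiniteDimensional ℂ X)
    (h : ∀ (Y : Submodule ℂ X) [IsClosed (Y : Set X)], Y ≠ ⊥ → Y ≠ ⊤ →
      ∀ (n : ℕ) (z : Matrix (Fin n) (Fin n) (X ⧸ Y)),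
        OSP.quotN os.N Y n z = OSP.maxN (X ⧸ Y) n z) :
    ∀ (n : ℕ) (x : Matrix (Fin n) (Fin n) X), os.N n x = OSP.maxN X n x := fun n x =>
  le_antisymm (os.N_le_maxN x) <| OSP.maxN_le (os.nonneg n x) fun Z _ hu =>
    os.N_map_le_of_forall_quotient_maximal hinf h Z hu x

/-- if `X` is an infinite dimensional operator space such that the quotient
of `X` by every proper closed nontrivial subspace is maximal, then `X` is maximal. -/
theorem stmt18 (X : Type) [NormedAddCommGroup X] [NormedSpace ℂ X] [CompleteSpace X]
    (os : OSP.OSS X) (hinf : ¬ FiniteDimensional ℂ X)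
    (h : ∀ (Y : Submodule ℂ X) [IsClosed (Y : Set X)], Y ≠ ⊥ → Y ≠ ⊤ →
      ∀ (n : ℕ) (z : Matrix (Fin n) (Fin n) (X ⧸ Y)),
        OSP.quotN os.N Y n z = OSP.maxN (X ⧸ Y) n z) :
    ∀ (n : ℕ) (x : Matrix (Fin n) (Fin n) X), os.N n x = OSP.maxN X n x :=
  stmt18_general X os hinf h
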